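/- arXiv:2203.02806 — 4 statements merged into one kernel-verified Lean document; each statement's English description precedes it below -/
import Mathlib

section
/- Let V be a nonnegative C¹ function with ∇V · f ≤ −V on M₊ and V⁻¹({0}) ∩ M₊ = A (a compact subset of M₊). Then the infimum p₃* of ∫_{M₊} w dλ over all pairs (w, V') of a continuous w ≥ 0 and a nonnegative C¹ function V' with w + V' ≥ 1 and ∇V' · f ≤ −V' on M₊ satisfies p₃* ≤ λ(A). -/
/-!
For every `k`, the pair `(max (1 - k V) 0, k V)` is feasible: the Lyapunov inequality is linear
in `V`, so it survives scaling by `k ≥ 0`. As `k → ∞`, `max (1 - k V) 0` decreases to the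
indicator of the zero set of `V`, which meets `M` in `A`, so by dominated convergence on the
finite-measure set `M` the costs tend to `λ(A)`, which therefore bounds the infimum.
-/

open Set MeasureTheory Filter Topology

theorem fderiv_const_mul_apply_le_neg {E : Type*} [NormedAddCommGroup E] [NormedSpace ℝ E]
    {V : E → ℝ} {x v : E} (hV : DifferentiableAt ℝ V x) (hLyap : fderiv ℝ V x v ≤ -V x)
    {c : ℝ} (hc : 0 ≤ c) :
    fderiv ℝ (fun y => c * V y) x v ≤ -(c * V x) := by
  rw [fderiv_const_mul hV, FunLike.coe_smul, Pi.smul_apply, smul_eq_mul]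
  nlinarith

theorem tendsto_max_one_sub_nat_mul {t : ℝ} (ht : 0 ≤ t) :
    Tendsto (fun k : ℕ => max (1 - k * t) 0) atTop (𝓝 (({0} : Set ℝ).indicator 1 t)) := by
  rcases ht.eq_or_lt with rfl | ht
  · simp
  · rw [indicator_of_notMem (show t ∉ ({0} : Set ℝ) from ht.ne')]
    refine tendsto_const_nhds.congr' ?_
    filter_upwards [(tendsto_natCast_atTop_atTop.atTop_mul_const ht).eventually_ge_atTop 1]
      with k hk
    exact (max_eq_right (by linarith)).symm

theorem tendsto_setIntegral_max_one_sub_nat_mul {E : Type*} [MeasurableSpace E]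
    {μ : Measure E} {M : Set E} (hμM : μ M ≠ ⊤) {V : E → ℝ} (hV : Measurable V)
    (hV0 : ∀ x, 0 ≤ V x) :
    Tendsto (fun k : ℕ => ∫ x in M, max (1 - k * V x) 0 ∂μ) atTop
      (𝓝 (μ.real (V ⁻¹' {0} ∩ M))) := by
  have hZ : MeasurableSet (V ⁻¹' {0}) := hV (measurableSet_singleton 0)
  rw [← measureReal_restrict_apply hZ, ← integral_indicator_one hZ]
  refine tendsto_integral_of_dominated_convergence (fun _ => 1)
    (fun k => (by fun_prop : Measurable fun x => max (1 - k * V x) 0).aestronglyMeasurable)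
    (integrableOn_const hμM) (fun k => ae_of_all _ fun x => ?_)
    (ae_of_all _ fun x => tendsto_max_one_sub_nat_mul (hV0 x))
  have : 0 ≤ (k : ℝ) * V x := mul_nonneg k.cast_nonneg (hV0 x)
  rw [Real.norm_of_nonneg (le_max_right _ _)]
  exact max_le (by linarith) zero_le_one

theorem lyapunov_lp_upper_bound_general {n : ℕ}
    (f : EuclideanSpace ℝ (Fin n) → EuclideanSpace ℝ (Fin n))
    (M A : Set (EuclideanSpace ℝ (Fin n)))
    (hMc : IsCompact M) (hMmeas : MeasurableSet M)
    (V : EuclideanSpace ℝ (Fin n) → ℝ) (hV : ContDiff ℝ 1 V)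
    (hV0 : ∀ x, 0 ≤ V x)
    (hLyap : ∀ x ∈ M, fderiv ℝ V x (f x) ≤ -V x)
    (hzero : V ⁻¹' {0} ∩ M = A) :
    sInf {c : ℝ | ∃ w V' : EuclideanSpace ℝ (Fin n) → ℝ,
        ContinuousOn w M ∧ ContDiff ℝ 1 V' ∧
        (∀ x ∈ M, 0 ≤ w x) ∧ (∀ x, 0 ≤ V' x) ∧
        (∀ x ∈ M, 1 ≤ w x + V' x) ∧
        (∀ x ∈ M, fderiv ℝ V' x (f x) ≤ -V' x) ∧
        c = ∫ x in M, w x} ≤ (volume A).toReal := by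
  have hVc : Continuous V := hV.continuous
  have hcost := tendsto_setIntegral_max_one_sub_nat_mul (hMc.measure_lt_top (μ := volume)).ne
    hVc.measurable hV0
  rw [hzero] at hcost
  refine ge_of_tendsto' hcost fun k => csInf_le ⟨0, ?_⟩ ⟨fun x => max (1 - k * V x) 0,
    fun x => k * V x, by fun_prop, contDiff_const.mul hV, fun _ _ => le_max_right _ _,
    fun x => mul_nonneg k.cast_nonneg (hV0 x), fun x _ => ?_, fun x hx => ?_, rfl⟩
  · rintro c ⟨w, -, -, -, hw0, -, -, -, rfl⟩
    exact setIntegral_nonneg hMmeas hw0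
  · linarith [le_max_left (1 - k * V x) 0]
  · exact fderiv_const_mul_apply_le_neg ((hV.differentiable one_ne_zero) x) (hLyap x hx)
      k.cast_nonneg

/-- Upper bound p₃* ≤ λ(A) for the Lyapunov LP, given a Lyapunov function whose
zero set in M₊ is A. -/
theorem lyapunov_lp_upper_bound {n : ℕ}
    (f : EuclideanSpace ℝ (Fin n) → EuclideanSpace ℝ (Fin n))
    (M A : Set (EuclideanSpace ℝ (Fin n)))
    (hMc : IsCompact M) (hMmeas : MeasurableSet M)
    (hAc : IsCompact A) (hAM : A ⊆ M) (hAmeas : MeasurableSet A)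
    (V : EuclideanSpace ℝ (Fin n) → ℝ) (hV : ContDiff ℝ 1 V)
    (hV0 : ∀ x, 0 ≤ V x)
    (hLyap : ∀ x ∈ M, fderiv ℝ V x (f x) ≤ -V x)
    (hzero : V ⁻¹' {0} ∩ M = A) :
    sInf {c : ℝ | ∃ w V' : EuclideanSpace ℝ (Fin n) → ℝ,
        ContinuousOn w M ∧ ContDiff ℝ 1 V' ∧
        (∀ x ∈ M, 0 ≤ w x) ∧ (∀ x, 0 ≤ V' x) ∧
        (∀ x ∈ M, 1 ≤ w x + V' x) ∧
        (∀ x ∈ M, fderiv ℝ V' x (f x) ≤ -V' x) ∧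
        c = ∫ x in M, w x} ≤ (volume A).toReal :=
  lyapunov_lp_upper_bound_general f M A hMc hMmeas V hV hV0 hLyap hzero
end

section
/- Let 𝒜 ⊂ M₊ be such that every nonnegative C¹ function V with ∇V · f ≤ −V on M₊ vanishes on 𝒜. Then for every feasible pair (w, V) of the LP (w continuous, w ≥ 0, V ≥ 0 C¹, w + V ≥ 1, ∇V · f ≤ −V on M₊) one has ∫_{M₊} w dλ ≥ λ(𝒜); hence p₃* ≥ λ(𝒜). -/
open Set MeasureTheory

/- The Lyapunov function V of a feasible pair vanishes on 𝒜, so w ≥ 1 there by w + V ≥ 1; Markov's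
inequality for w on M then bounds λ(𝒜) by ∫_M w. -/

theorem measureReal_le_setIntegral_of_one_le {X : Type*} [MeasurableSpace X] {μ : Measure X}
    {s K : Set X} {w : X → ℝ} (hK : MeasurableSet K) (hμK : μ K ≠ ⊤) (hsK : s ⊆ K)
    (hw : IntegrableOn w K μ) (hw0 : ∀ x ∈ K, 0 ≤ w x) (hw1 : ∀ x ∈ s, 1 ≤ w x) :
    μ.real s ≤ ∫ x in K, w x ∂μ := by
  have markov := mul_meas_ge_le_integral_of_nonneg (ae_restrict_of_forall_mem hK hw0) hw 1
  rw [one_mul, measureReal_restrict_apply' hK] at markov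
  have hsub : s ⊆ {x | 1 ≤ w x} ∩ K := fun x hx => ⟨hw1 x hx, hsK hx⟩
  exact (measureReal_mono hsub (measure_ne_top_of_subset inter_subset_right hμK)).trans markov

theorem lyapunov_lp_lower_bound_general {n : ℕ}
    (f : EuclideanSpace ℝ (Fin n) → EuclideanSpace ℝ (Fin n))
    (M 𝓐 : Set (EuclideanSpace ℝ (Fin n)))
    (hMc : IsCompact M)
    (h𝓐M : 𝓐 ⊆ M)
    (hvanish : ∀ V : EuclideanSpace ℝ (Fin n) → ℝ, ContDiff ℝ 1 V →
      (∀ x, 0 ≤ V x) → (∀ x ∈ M, fderiv ℝ V x (f x) ≤ -V x) → ∀ x ∈ 𝓐, V x = 0) :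
    ∀ w V : EuclideanSpace ℝ (Fin n) → ℝ,
      ContinuousOn w M → ContDiff ℝ 1 V →
      (∀ x ∈ M, 0 ≤ w x) → (∀ x, 0 ≤ V x) →
      (∀ x ∈ M, 1 ≤ w x + V x) →
      (∀ x ∈ M, fderiv ℝ V x (f x) ≤ -V x) →
      (volume 𝓐).toReal ≤ ∫ x in M, w x := by
  intro w V hw hV hw0 hV0 hwV hlyap
  have hV𝓐 := hvanish V hV hV0 hlyap
  refine measureReal_le_setIntegral_of_one_le hMc.isClosed.measurableSet hMc.measure_lt_top.ne
    h𝓐M (hw.integrableOn_compact hMc) hw0 fun x hx => ?_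
  linarith [hwV x (h𝓐M hx), hV𝓐 x hx]

/-- Lower bound: if every Lyapunov function vanishes on 𝒜, then every feasible
pair of the Lyapunov LP has cost at least λ(𝒜). -/
theorem lyapunov_lp_lower_bound {n : ℕ}
    (f : EuclideanSpace ℝ (Fin n) → EuclideanSpace ℝ (Fin n))
    (M 𝓐 : Set (EuclideanSpace ℝ (Fin n)))
    (hMc : IsCompact M) (hMmeas : MeasurableSet M)
    (h𝓐M : 𝓐 ⊆ M) (h𝓐meas : MeasurableSet 𝓐)
    (hvanish : ∀ V : EuclideanSpace ℝ (Fin n) → ℝ, ContDiff ℝ 1 V →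
      (∀ x, 0 ≤ V x) → (∀ x ∈ M, fderiv ℝ V x (f x) ≤ -V x) → ∀ x ∈ 𝓐, V x = 0) :
    ∀ w V : EuclideanSpace ℝ (Fin n) → ℝ,
      ContinuousOn w M → ContDiff ℝ 1 V →
      (∀ x ∈ M, 0 ≤ w x) → (∀ x, 0 ≤ V x) →
      (∀ x ∈ M, 1 ≤ w x + V x) →
      (∀ x ∈ M, fderiv ℝ V x (f x) ≤ -V x) →
      (volume 𝓐).toReal ≤ ∫ x in M, w x :=
  lyapunov_lp_lower_bound_general f M 𝓐 hMc h𝓐M hvanish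
end

section
/- Let f : ℝⁿ → ℝⁿ be continuous with flow φ_t, X compact with MPI set M₊, β > 0, and v ∈ C¹(ℝⁿ) satisfy β v(x) − ∇v(x) · f(x) ≥ 0 for all x ∈ X. Then v ≥ 0 on M₊. -/
open Set

/-- If βv - ∇v·f ≥ 0 on X then v ≥ 0 on the MPI set M₊ (Korda–Henrion–Jones,
Lemma 3). -/
theorem discounted_inequality_nonneg_on_mpi {n : ℕ}
    (f : EuclideanSpace ℝ (Fin n) → EuclideanSpace ℝ (Fin n))
    (hf : Continuous f)
    (X : Set (EuclideanSpace ℝ (Fin n))) (hX : IsCompact X)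
    (φ : EuclideanSpace ℝ (Fin n) → ℝ → EuclideanSpace ℝ (Fin n))
    (hφ0 : ∀ x, φ x 0 = x)
    (hφadd : ∀ x, ∀ s t : ℝ, 0 ≤ s → 0 ≤ t → φ x (s + t) = φ (φ x s) t)
    (hode : ∀ x, ∀ t : ℝ, HasDerivAt (φ x) (f (φ x t)) t)
    (M : Set (EuclideanSpace ℝ (Fin n)))
    (hM : M = {x ∈ X | ∀ t : ℝ, 0 ≤ t → φ x t ∈ X})
    (β : ℝ) (hβ : 0 < β)
    (v : EuclideanSpace ℝ (Fin n) → ℝ) (hv : ContDiff ℝ 1 v)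
    (hineq : ∀ x ∈ X, 0 ≤ β * v x - fderiv ℝ v x (f x)) :
    ∀ x ∈ M, 0 ≤ v x := by
  intro x hx
  rw [hM] at hx
  obtain ⟨hxX, hxt⟩ := hx
  -- bound on |v| on X
  obtain ⟨C, hC⟩ : ∃ C : ℝ, ∀ y ∈ X, |v y| ≤ C := by
    obtain ⟨C, hC⟩ := (hX.image (hv.continuous.abs)).bddAbove
    exact ⟨C, fun y hy => hC ⟨y, hy, rfl⟩⟩
  -- the auxiliary function
  set g : ℝ → ℝ := fun t => Real.exp (-β * t) * v (φ x t) with hg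
  have hvdiff := hv.differentiable one_ne_zero
  have hderiv : ∀ t : ℝ, HasDerivAt g
      (Real.exp (-β * t) * (-β) * v (φ x t)
        + Real.exp (-β * t) * fderiv ℝ v (φ x t) (f (φ x t))) t := by
    intro t
    have h1 : HasDerivAt (fun t : ℝ => Real.exp (-β * t))
        (Real.exp (-β * t) * (-β)) t := by
      have := ((hasDerivAt_id t).const_mul (-β)).exp
      simpa [mul_comm] using this
    have h2 : HasDerivAt (fun t => v (φ x t))
        (fderiv ℝ v (φ x t) (f (φ x t))) t :=
      (hvdiff (φ x t)).hasFDerivAt.comp_hasDerivAt t (hode x t)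
    exact h1.mul h2
  have hcont : Continuous g := by
    have : Differentiable ℝ g := fun t => (hderiv t).differentiableAt
    exact this.continuous
  -- g is antitone on [0, ∞)
  have hanti : AntitoneOn g (Ici (0 : ℝ)) := by
    apply antitoneOn_of_deriv_nonpos (convex_Ici 0) hcont.continuousOn
    · intro t ht
      exact ((hderiv t).differentiableAt).differentiableWithinAt
    · intro t ht
      rw [interior_Ici] at ht
      rw [(hderiv t).deriv]
      have hmem : φ x t ∈ X := hxt t (le_of_lt ht)
      have := hineq (φ x t) hmem
      have hexp : (0 : ℝ) < Real.exp (-β * t) := Real.exp_pos _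
      nlinarith [this, hexp]
  -- v x ≥ g t ≥ -exp(-βt) C for t ≥ 0
  have hbound : ∀ t : ℝ, 0 ≤ t → -(Real.exp (-β * t) * C) ≤ v x := by
    intro t ht
    have h1 : g t ≤ g 0 := hanti (le_refl (0:ℝ)) ht ht
    have h2 : g 0 = v x := by simp [hg, hφ0]
    have h3 : -C ≤ v (φ x t) := by
      have := hC (φ x t) (hxt t ht)
      exact neg_le_of_abs_le this
    have h4 : -(Real.exp (-β * t) * C) ≤ g t := by
      have hexp : (0 : ℝ) < Real.exp (-β * t) := Real.exp_pos _
      have := mul_le_mul_of_nonneg_left h3 hexp.le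
      simpa [hg, mul_neg] using this
    linarith
  -- take limit t → ∞
  have hlim : Filter.Tendsto (fun t : ℝ => -(Real.exp (-β * t) * C))
      Filter.atTop (nhds 0) := by
    have h1 : Filter.Tendsto (fun t : ℝ => β * t) Filter.atTop Filter.atTop :=
      Filter.tendsto_id.const_mul_atTop hβ
    have h2 : Filter.Tendsto (fun t : ℝ => Real.exp (-β * t))
        Filter.atTop (nhds 0) := by
      have := Real.tendsto_exp_neg_atTop_nhds_zero.comp h1
      simpa only [Function.comp_def, neg_mul] using this
    have := (h2.mul_const C).neg
    simpa using this
  exact le_of_tendsto hlim (Filter.eventually_atTop.mpr ⟨0, fun t ht => hbound t ht⟩)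
end

section
/- Let w, J, v, f be continuous on the compact set X, with ∇J·f continuous, and let δ > 0, ε ≥ 0. Suppose w + J ≥ 1 and ∇J·f + J ≤ ε hold on M₊ ⊂ X, v ≤ 0 on X with v < 0 on X \ M₊, and set U := {x ∈ X : w(x)+J(x) < 1−δ or ∇J(x)·f(x)+J(x) > ε+δ}. Then U̅ ∩ M₊ = ∅, there is ρ > 0 with −v > ρ on U, and for every k ≥ ρ⁻¹ max_{x∈U̅} max{1−δ−w(x)−J(x), ∇J(x)·f(x)+J(x)−ε} one has w + δ + J − kv ≥ 1 and ∇J·f + J + kv ≤ ε + δ on all of X. -/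
open Set

/-- Key construction in Theorem 1 (p₅* ≤ p₄*): scaling the function v kills the
constraint violations off M₊. -/
theorem scaling_kills_violations {n : ℕ}
    (f : EuclideanSpace ℝ (Fin n) → EuclideanSpace ℝ (Fin n))
    (X M : Set (EuclideanSpace ℝ (Fin n)))
    (hX : IsCompact X) (hM : IsClosed M) (hMX : M ⊆ X)
    (w J v : EuclideanSpace ℝ (Fin n) → ℝ)
    (hw_cont : ContinuousOn w X) (hJ_cont : ContinuousOn J X)
    (hv_cont : ContinuousOn v X) (hf_cont : ContinuousOn f X)
    (hJf_cont : ContinuousOn (fun x => fderiv ℝ J x (f x)) X)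
    (δ ε : ℝ) (hδ : 0 < δ) (hε : 0 ≤ ε)
    (h1 : ∀ x ∈ M, 1 ≤ w x + J x)
    (h2 : ∀ x ∈ M, fderiv ℝ J x (f x) + J x ≤ ε)
    (hv0 : ∀ x ∈ X, v x ≤ 0)
    (hvneg : ∀ x ∈ X \ M, v x < 0)
    (U : Set (EuclideanSpace ℝ (Fin n)))
    (hU : U = {x ∈ X | w x + J x < 1 - δ ∨ ε + δ < fderiv ℝ J x (f x) + J x}) :
    closure U ∩ M = ∅ ∧
    ∃ ρ : ℝ, 0 < ρ ∧ (∀ x ∈ U, ρ < -v x) ∧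
      ∀ k : ℝ, 0 ≤ k →
        ρ⁻¹ * (sSup ((fun x => max (1 - δ - w x - J x)
            (fderiv ℝ J x (f x) + J x - ε)) '' closure U)) ≤ k →
        ∀ x ∈ X, 1 ≤ w x + δ + J x - k * v x ∧
          fderiv ℝ J x (f x) + J x + k * v x ≤ ε + δ := by
  have hUX : U ⊆ X := by rw [hU]; exact fun x hx => hx.1
  have hclU : closure U ⊆ X := closure_minimal hUX hX.isClosed
  -- points of X not in U satisfy both non-strict inequalities
  have hXnotU : ∀ x ∈ X, x ∉ U →
      1 - δ ≤ w x + J x ∧ fderiv ℝ J x (f x) + J x ≤ ε + δ := by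
    intro x hxX hxU
    rw [hU] at hxU
    simp only [mem_setOf_eq, not_and, not_or, not_lt] at hxU
    exact hxU hxX
  -- Part 1: closure U ∩ M = ∅
  have hdisj : closure U ∩ M = ∅ := by
    rw [eq_empty_iff_forall_notMem]
    rintro x ⟨hxc, hxM⟩
    have hxX : x ∈ X := hMX hxM
    have hg : ContinuousWithinAt (fun y => w y + J y) X x :=
      (hw_cont.add hJ_cont) x hxX
    have hh : ContinuousWithinAt (fun y => fderiv ℝ J y (f y) + J y) X x :=
      (hJf_cont.add hJ_cont) x hxX
    have h1x : (1 : ℝ) - δ < w x + J x := by linarith [h1 x hxM]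
    have h2x : fderiv ℝ J x (f x) + J x < ε + δ := by linarith [h2 x hxM]
    have hA : (fun y => w y + J y) ⁻¹' Ioi (1 - δ) ∈ nhdsWithin x X :=
      hg (Ioi_mem_nhds h1x)
    have hB : (fun y => fderiv ℝ J y (f y) + J y) ⁻¹' Iio (ε + δ) ∈ nhdsWithin x X :=
      hh (Iio_mem_nhds h2x)
    have hle : nhdsWithin x U ≤ nhdsWithin x X := nhdsWithin_mono x hUX
    have hne : (nhdsWithin x U).NeBot := mem_closure_iff_nhdsWithin_neBot.mp hxc
    have hAB : ((fun y => w y + J y) ⁻¹' Ioi (1 - δ) ∩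
        (fun y => fderiv ℝ J y (f y) + J y) ⁻¹' Iio (ε + δ)) ∩ U ∈ nhdsWithin x U :=
      Filter.inter_mem (hle (Filter.inter_mem hA hB)) self_mem_nhdsWithin
    obtain ⟨y, ⟨⟨hy1, hy2⟩, hyU⟩⟩ := Filter.nonempty_of_mem hAB
    rw [hU] at hyU
    rcases hyU.2 with h | h
    · exact absurd hy1 (by simpa using not_lt.mpr h.le)
    · exact absurd hy2 (by simpa using not_lt.mpr h.le)
  refine ⟨hdisj, ?_⟩
  rcases U.eq_empty_or_nonempty with hUe | hUne
  · refine ⟨1, one_pos, by simp [hUe], ?_⟩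
    intro k hk0 _ x hxX
    have hxU : x ∉ U := by simp [hUe]
    obtain ⟨e1, e2⟩ := hXnotU x hxX hxU
    have hkv : k * v x ≤ 0 := mul_nonpos_of_nonneg_of_nonpos hk0 (hv0 x hxX)
    constructor <;> linarith
  · -- closure U is a nonempty compact set on which -v is positive
    have hK : IsCompact (closure U) := hX.of_isClosed_subset isClosed_closure hclU
    have hKne : (closure U).Nonempty := hUne.closure
    have hvK : ContinuousOn (fun y => -v y) (closure U) := (hv_cont.neg).mono hclU
    obtain ⟨x₀, hx₀K, hx₀min'⟩ := hK.exists_isMinOn hKne hvK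
    have hx₀min : ∀ y ∈ closure U, -v x₀ ≤ -v y := fun y hy => hx₀min' hy
    have hx₀pos : 0 < -v x₀ := by
      have hx₀M : x₀ ∉ M := by
        intro h
        have : x₀ ∈ closure U ∩ M := ⟨hx₀K, h⟩
        rw [hdisj] at this
        exact this
      have := hvneg x₀ ⟨hclU hx₀K, hx₀M⟩
      linarith
    set m := -v x₀ with hm
    refine ⟨m / 2, by linarith, ?_, ?_⟩
    · intro x hxU
      have := hx₀min x (subset_closure hxU)
      linarith
    · intro k hk0 hk x hxX
      set φ : EuclideanSpace ℝ (Fin n) → ℝ :=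
        fun x => max (1 - δ - w x - J x) (fderiv ℝ J x (f x) + J x - ε) with hφ
      set S := sSup (φ '' closure U) with hS
      have hρ : (0 : ℝ) < m / 2 := by linarith
      have hk' : S ≤ k * (m / 2) := by
        have := mul_le_mul_of_nonneg_right hk hρ.le
        calc S = (m / 2)⁻¹ * S * (m / 2) := by field_simp
        _ ≤ k * (m / 2) := this
      by_cases hxU : x ∈ U
      · have hφcont : ContinuousOn φ X :=
          ((continuousOn_const.sub hw_cont).sub hJ_cont).sup
            ((hJf_cont.add hJ_cont).sub continuousOn_const)
        have hbdd : BddAbove (φ '' closure U) :=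
          (hK.image_of_continuousOn (hφcont.mono hclU)).bddAbove
        have hφS : φ x ≤ S := le_csSup hbdd (mem_image_of_mem φ (subset_closure hxU))
        have e1 : 1 - δ - w x - J x ≤ S := le_trans (le_max_left _ _) hφS
        have e2 : fderiv ℝ J x (f x) + J x - ε ≤ S := le_trans (le_max_right _ _) hφS
        have hvx : m ≤ -v x := hx₀min x (subset_closure hxU)
        have hkv : k * (m / 2) ≤ k * (-v x) :=
          mul_le_mul_of_nonneg_left (by linarith) hk0
        have hE : k * (-v x) = -(k * v x) := by ring
        constructor <;> linarith
      · obtain ⟨e1, e2⟩ := hXnotU x hxX hxU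
        have hkv : k * v x ≤ 0 := mul_nonpos_of_nonneg_of_nonpos hk0 (hv0 x hxX)
        constructor <;> linarith
end
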